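/- arXiv:2010.16222 — 5 statements merged into one kernel-verified Lean document; each statement's English description precedes it below -/
import Mathlib

section
/- Let k ≥ 1 and let T be a symmetric rank-k tensor on ℝ^N. Suppose there exist a family of real numbers T'_{i₁…i_{k−1}} (indices in {1,…,N}, no symmetry assumed) and a nonzero vector u ∈ ℝ^N such that T_{i₁…i_k} = T'_{i₁…i_{k−1}} · u_{i_k} for all indices. Then there exists c ∈ ℝ such that T_{i₁…i_k} = c · u_{i₁} ⋯ u_{i_k} for all indices. -/
/-!
Fix `j` with `u j ≠ 0`. Since `T` is symmetric, the factorisation `T = T' ⊗ u` through the last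
slot transports to every slot `i`: `T f = S f * u (f i)` with `S` independent of `f i`. Hence
resetting the `i`-th index to `j` multiplies `T f` by `u j / u (f i)`, and resetting all of them
gives `T (fun _ => j) * ∏ t, u (f t) = T f * u j ^ (k + 1)`.
-/

open Function Finset

/-- A rank-`k` tensor on `ℝ^N` is symmetric if it is invariant under all
permutations of its indices. -/
def IsSym {N k : ℕ} (T : (Fin k → Fin N) → ℝ) : Prop :=
  ∀ (σ : Equiv.Perm (Fin k)) (f : Fin k → Fin N), T (f ∘ σ) = T f

section FactorAt

variable {ι α M : Type*} [DecidableEq ι]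

def HasFactorAt [Mul M] (T : (ι → α) → M) (u : α → M) (i : ι) : Prop :=
  ∃ S : (ι → α) → M, (∀ f a, S (update f i a) = S f) ∧ ∀ f, T f = S f * u (f i)

theorem HasFactorAt.mul_update_eq [CommSemigroup M] {T : (ι → α) → M} {u : α → M} {i : ι}
    (hT : HasFactorAt T u i) (f : ι → α) (a : α) :
    T (update f i a) * u (f i) = T f * u a := by
  obtain ⟨S, hS, hTS⟩ := hT
  rw [hTS, hTS, hS, update_self, mul_right_comm]

theorem piecewise_mul_prod_eq_of_forall_hasFactorAt [CommMonoid M] {T : (ι → α) → M}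
    {u : α → M} (hT : ∀ i, HasFactorAt T u i) (f : ι → α) (a : α) (s : Finset ι) :
    T (s.piecewise (fun _ => a) f) * ∏ i ∈ s, u (f i) = T f * u a ^ s.card := by
  induction s using Finset.induction with
  | empty => simp
  | insert i s hi ih =>
    have hfi : s.piecewise (fun _ => a) f i = f i := s.piecewise_eq_of_notMem _ _ hi
    calc T ((insert i s).piecewise (fun _ => a) f) * ∏ t ∈ insert i s, u (f t)
        = T (update (s.piecewise (fun _ => a) f) i a) * u (s.piecewise (fun _ => a) f i)
            * ∏ t ∈ s, u (f t) := by
          rw [piecewise_insert, prod_insert hi, hfi, mul_assoc]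
      _ = T f * u a ^ (insert i s).card := by
          rw [(hT i).mul_update_eq, mul_right_comm, ih, card_insert_of_notMem hi, pow_succ,
            mul_assoc]

theorem exists_eq_mul_prod_of_forall_hasFactorAt [Fintype ι] [Field M] {T : (ι → α) → M}
    {u : α → M} (hT : ∀ i, HasFactorAt T u i) (hu : u ≠ 0) :
    ∃ c : M, ∀ f, T f = c * ∏ i, u (f i) := by
  obtain ⟨a, ha⟩ := Function.ne_iff.mp hu
  refine ⟨T (fun _ => a) / u a ^ Fintype.card ι, fun f => ?_⟩
  have key := piecewise_mul_prod_eq_of_forall_hasFactorAt hT f a univ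
  rw [piecewise_univ, card_univ] at key
  rw [div_mul_eq_mul_div, key, mul_div_cancel_right₀ _ (pow_ne_zero _ ha)]

end FactorAt

theorem hasFactorAt_of_isSym {N k : ℕ} {T : (Fin (k + 1) → Fin N) → ℝ} (hT : IsSym T)
    {T' : (Fin k → Fin N) → ℝ} {u : Fin N → ℝ}
    (h : ∀ f : Fin (k + 1) → Fin N, T f = T' (fun t => f t.castSucc) * u (f (Fin.last k)))
    (i : Fin (k + 1)) : HasFactorAt T u i := by
  set σ := Equiv.swap i (Fin.last k)
  have hσ_ne (t : Fin k) : σ t.castSucc ≠ i := by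
    rw [Ne, Equiv.swap_apply_eq_iff, Equiv.swap_apply_left]
    exact (Fin.castSucc_lt_last t).ne
  refine ⟨fun f => T' (fun t => f (σ t.castSucc)), fun f a => ?_, fun f => ?_⟩
  · simp only [update_of_ne (hσ_ne _)]
  · rw [← hT σ f, h]
    simp [σ, Equiv.swap_apply_right]

theorem sym_tensor_factor_general {N k : ℕ}
    (T : (Fin (k + 1) → Fin N) → ℝ) (hT : IsSym T)
    (T' : (Fin k → Fin N) → ℝ) (u : Fin N → ℝ) (hu : u ≠ 0)
    (h : ∀ f : Fin (k + 1) → Fin N,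
      T f = T' (fun t => f t.castSucc) * u (f (Fin.last k))) :
    ∃ c : ℝ, ∀ f : Fin (k + 1) → Fin N, T f = c * ∏ t, u (f t) :=
  exists_eq_mul_prod_of_forall_hasFactorAt (hasFactorAt_of_isSym hT h) hu

/-- if a symmetric rank-`(k+1)` tensor `T` (with `k + 1 ≥ 1`) can be
written as `T = T' ⊗ u` for some (not necessarily symmetric) rank-`k` family `T'`
and a nonzero vector `u`, then `T = c · u^{⊗(k+1)}` for some constant `c`. -/
theorem sym_tensor_factor {N k : ℕ} (hN : 1 ≤ N)
    (T : (Fin (k + 1) → Fin N) → ℝ) (hT : IsSym T)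
    (T' : (Fin k → Fin N) → ℝ) (u : Fin N → ℝ) (hu : u ≠ 0)
    (h : ∀ f : Fin (k + 1) → Fin N,
      T f = T' (fun t => f t.castSucc) * u (f (Fin.last k))) :
    ∃ c : ℝ, ∀ f : Fin (k + 1) → Fin N, T f = c * ∏ t, u (f t) :=
  sym_tensor_factor_general T hT T' u hu h
end

section
/- If λ is a one-loop fixed point on ℝ^N and λ is not identically zero, then ‖λ‖ ≥ 1/3. -/
/-- A quartic coupling on `ℝ^N`: a rank-4 tensor invariant under all
permutations of its four indices. -/
def IsSym4 {N : ℕ} (A : (Fin 4 → Fin N) → ℝ) : Prop :=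
  ∀ (σ : Equiv.Perm (Fin 4)) (f : Fin 4 → Fin N), A (f ∘ σ) = A f

/-- The one-loop fixed point equation
`λ_{ijkl} = ∑_{m,n} (λ_{ijmn}λ_{klmn} + λ_{ikmn}λ_{jlmn} + λ_{ilmn}λ_{jkmn})`. -/
def IsFixedPoint {N : ℕ} (A : (Fin 4 → Fin N) → ℝ) : Prop :=
  ∀ i j k l : Fin N, A ![i, j, k, l] =
    ∑ m : Fin N, ∑ n : Fin N,
      (A ![i, j, m, n] * A ![k, l, m, n] + A ![i, k, m, n] * A ![j, l, m, n]
        + A ![i, l, m, n] * A ![j, k, m, n])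

/-- `‖λ‖² = ∑_{i,j,k,l} λ_{ijkl}²`. -/
def sqnorm {N : ℕ} (A : (Fin 4 → Fin N) → ℝ) : ℝ :=
  ∑ i : Fin N, ∑ j : Fin N, ∑ k : Fin N, ∑ l : Fin N, (A ![i, j, k, l]) ^ 2

/-- `a₀(λ) = ∑_{i,j} λ_{iijj}`. -/
def a0 {N : ℕ} (A : (Fin 4 → Fin N) → ℝ) : ℝ :=
  ∑ i : Fin N, ∑ j : Fin N, A ![i, i, j, j]

/-- `t_{ij}(λ) = ∑_k λ_{ijkk}`. -/
def tmat {N : ℕ} (A : (Fin 4 → Fin N) → ℝ) (i j : Fin N) : ℝ :=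
  ∑ k : Fin N, A ![i, j, k, k]

/-!
Write `S = ‖λ‖²` and `C_{ijkl} = ∑_{m,n} λ_{ijmn} λ_{klmn}`, so that the fixed point equation
reads `λ_{ijkl} = C_{ijkl} + C_{ikjl} + C_{iljk}`. Viewing `λ` as a matrix indexed by pairs,
`C = λ λᵀ`, and Cauchy–Schwarz gives `∑ C² ≤ S²`; the other two channels are reindexings of `C`.
Pairing the fixed point equation with `λ` and applying Cauchy–Schwarz to each channel gives
`S ≤ 3 √S · S`, hence `1 ≤ 3 √S` as soon as `λ ≠ 0`.
-/

open Finset Real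

section FourIndex

variable {ι : Type*} [Fintype ι]

theorem sum4_eq_sum_prod (f : ι → ι → ι → ι → ℝ) :
    ∑ i, ∑ j, ∑ k, ∑ l, f i j k l = ∑ x : ι × ι × ι × ι, f x.1 x.2.1 x.2.2.1 x.2.2.2 := by
  simp only [Fintype.sum_prod_type]

theorem sum4_mul_le_sqrt_mul_sqrt (f g : ι → ι → ι → ι → ℝ) :
    ∑ i, ∑ j, ∑ k, ∑ l, f i j k l * g i j k l ≤
      √(∑ i, ∑ j, ∑ k, ∑ l, f i j k l ^ 2) * √(∑ i, ∑ j, ∑ k, ∑ l, g i j k l ^ 2) := by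
  simp only [sum4_eq_sum_prod]
  exact Real.sum_mul_le_sqrt_mul_sqrt _ _ _

theorem sum4_sq_pos {f : ι → ι → ι → ι → ℝ} {i j k l : ι} (h : f i j k l ≠ 0) :
    0 < ∑ i, ∑ j, ∑ k, ∑ l, f i j k l ^ 2 := by
  rw [sum4_eq_sum_prod]
  exact sum_pos' (fun _ _ => sq_nonneg _) ⟨(i, j, k, l), mem_univ _, by positivity⟩

def contract (B : ι → ι → ι → ι → ℝ) (i j k l : ι) : ℝ :=
  ∑ m, ∑ n, B i j m n * B k l m n

theorem sum_sq_contract_le (B : ι → ι → ι → ι → ℝ) :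
    ∑ i, ∑ j, ∑ k, ∑ l, contract B i j k l ^ 2 ≤ (∑ i, ∑ j, ∑ k, ∑ l, B i j k l ^ 2) ^ 2 := by
  have cauchySchwarz : ∀ i j k l, contract B i j k l ^ 2 ≤
      (∑ m, ∑ n, B i j m n ^ 2) * ∑ m, ∑ n, B k l m n ^ 2 := by
    intro i j k l
    simp only [contract, ← Fintype.sum_prod_type']
    exact sum_mul_sq_le_sq_mul_sq _ _ _
  calc ∑ i, ∑ j, ∑ k, ∑ l, contract B i j k l ^ 2
      ≤ ∑ i, ∑ j, ∑ k, ∑ l, (∑ m, ∑ n, B i j m n ^ 2) * ∑ m, ∑ n, B k l m n ^ 2 := by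
        gcongr with i _ j _ k _ l _
        exact cauchySchwarz i j k l
    _ = (∑ i, ∑ j, ∑ k, ∑ l, B i j k l ^ 2) ^ 2 := by
        have sq_sum_sum : ∀ R : ι → ι → ℝ,
            (∑ i, ∑ j, R i j) ^ 2 = ∑ i, ∑ j, ∑ k, ∑ l, R i j * R k l := by
          intro R
          simp only [sq, sum_mul_sum]
          exact sum_congr rfl fun _ _ => sum_comm
        exact (sq_sum_sum fun i j => ∑ m, ∑ n, B i j m n ^ 2).symm

theorem sum_sq_contract_swap (B : ι → ι → ι → ι → ℝ) :
    ∑ i, ∑ j, ∑ k, ∑ l, contract B i k j l ^ 2 = ∑ i, ∑ j, ∑ k, ∑ l, contract B i j k l ^ 2 :=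
  sum_congr rfl fun _ _ => sum_comm

theorem sum_sq_contract_cycle (B : ι → ι → ι → ι → ℝ) :
    ∑ i, ∑ j, ∑ k, ∑ l, contract B i l j k ^ 2 = ∑ i, ∑ j, ∑ k, ∑ l, contract B i j k l ^ 2 :=
  sum_congr rfl fun _ _ => (sum_congr rfl fun _ _ => sum_comm).trans sum_comm

theorem sum_mul_le_sqrt_mul_sum_sq (B g : ι → ι → ι → ι → ℝ)
    (hg : ∑ i, ∑ j, ∑ k, ∑ l, g i j k l ^ 2 ≤ (∑ i, ∑ j, ∑ k, ∑ l, B i j k l ^ 2) ^ 2) :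
    ∑ i, ∑ j, ∑ k, ∑ l, B i j k l * g i j k l ≤
      √(∑ i, ∑ j, ∑ k, ∑ l, B i j k l ^ 2) * ∑ i, ∑ j, ∑ k, ∑ l, B i j k l ^ 2 := by
  have hS : 0 ≤ ∑ i, ∑ j, ∑ k, ∑ l, B i j k l ^ 2 := by positivity
  exact (sum4_mul_le_sqrt_mul_sqrt B g).trans
    (mul_le_mul_of_nonneg_left ((sqrt_le_sqrt hg).trans (sqrt_sq hS).le) (sqrt_nonneg _))

theorem sum_sq_le_three_mul_sqrt_mul_sum_sq (B : ι → ι → ι → ι → ℝ)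
    (hB : ∀ i j k l, B i j k l = contract B i j k l + contract B i k j l + contract B i l j k) :
    ∑ i, ∑ j, ∑ k, ∑ l, B i j k l ^ 2 ≤
      3 * (√(∑ i, ∑ j, ∑ k, ∑ l, B i j k l ^ 2) * ∑ i, ∑ j, ∑ k, ∑ l, B i j k l ^ 2) := by
  have channel := sum_mul_le_sqrt_mul_sum_sq B
  have h₁ := channel (contract B) (sum_sq_contract_le B)
  have h₂ := channel (fun i j k l => contract B i k j l)
    ((sum_sq_contract_swap B).trans_le (sum_sq_contract_le B))
  have h₃ := channel (fun i j k l => contract B i l j k)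
    ((sum_sq_contract_cycle B).trans_le (sum_sq_contract_le B))
  calc ∑ i, ∑ j, ∑ k, ∑ l, B i j k l ^ 2
      = ∑ i, ∑ j, ∑ k, ∑ l, B i j k l * contract B i j k l
        + ∑ i, ∑ j, ∑ k, ∑ l, B i j k l * contract B i k j l
        + ∑ i, ∑ j, ∑ k, ∑ l, B i j k l * contract B i l j k := by
        simp only [← sum_add_distrib]
        refine sum_congr rfl fun i _ => sum_congr rfl fun j _ =>
          sum_congr rfl fun k _ => sum_congr rfl fun l _ => ?_
        rw [sq]
        nth_rw 1 [hB i j k l]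
        ring
    _ ≤ 3 * (√(∑ i, ∑ j, ∑ k, ∑ l, B i j k l ^ 2) * ∑ i, ∑ j, ∑ k, ∑ l, B i j k l ^ 2) := by
        linarith

end FourIndex

theorem IsFixedPoint.apply_eq_contract {N : ℕ} {A : (Fin 4 → Fin N) → ℝ} (hA : IsFixedPoint A)
    (i j k l : Fin N) :
    let B := fun i j k l => A ![i, j, k, l]
    B i j k l = contract B i j k l + contract B i k j l + contract B i l j k := by
  simp only [hA i j k l, contract, sum_add_distrib]

theorem fixedPoint_norm_lower_bound_general {N : ℕ}
    (A : (Fin 4 → Fin N) → ℝ) (hfp : IsFixedPoint A)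
    (hne : A ≠ 0) :
    (1 : ℝ) / 3 ≤ Real.sqrt (sqnorm A) := by
  obtain ⟨f, hf⟩ : ∃ f, A f ≠ 0 := Function.ne_iff.mp hne
  have hf' : A ![f 0, f 1, f 2, f 3] ≠ 0 := by
    convert hf using 2
    funext x; fin_cases x <;> rfl
  have hpos : 0 < sqnorm A := sum4_sq_pos (f := fun i j k l => A ![i, j, k, l]) hf'
  have hbound : sqnorm A ≤ 3 * (√(sqnorm A) * sqnorm A) :=
    sum_sq_le_three_mul_sqrt_mul_sum_sq _ hfp.apply_eq_contract
  have hbound' : 1 * sqnorm A ≤ (3 * √(sqnorm A)) * sqnorm A := by linarith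
  linarith [le_of_mul_le_mul_right hbound' hpos]

/-- any nonzero one-loop fixed point has `‖λ‖ ≥ 1/3`. -/
theorem fixedPoint_norm_lower_bound {N : ℕ} (hN : 1 ≤ N)
    (A : (Fin 4 → Fin N) → ℝ) (hA : IsSym4 A) (hfp : IsFixedPoint A)
    (hne : A ≠ 0) :
    (1 : ℝ) / 3 ≤ Real.sqrt (sqnorm A) :=
  fixedPoint_norm_lower_bound_general A hfp hne
end

section
/- If λ is a one-loop fixed point on ℝ^N with ‖λ‖ = 1/3, then there exists a unit vector u ∈ ℝ^N such that λ_{ijkl} = (1/3) u_i u_j u_k u_l for all i,j,k,l; i.e. λ is the Wilson–Fisher coupling. -/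
open Finset Matrix

section RankOne

variable {ι : Type*} [Fintype ι]

theorem eq_of_sum_sq_add_sum_sq_le_two_mul_sum_mul {κ : Type*} [Fintype κ] {f g : ι → κ → ℝ}
    (h : ∑ x, ∑ y, f x y ^ 2 + ∑ x, ∑ y, g x y ^ 2 ≤ 2 * ∑ x, ∑ y, f x y * g x y) :
    f = g := by
  have hexpand : ∑ x, ∑ y, (f x y - g x y) ^ 2 =
      ∑ x, ∑ y, f x y ^ 2 + ∑ x, ∑ y, g x y ^ 2 - 2 * ∑ x, ∑ y, f x y * g x y := by
    simp only [sub_sq, sum_add_distrib, sum_sub_distrib, mul_sum, mul_assoc]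
    ring
  have hzero : ∑ x, ∑ y, (f x y - g x y) ^ 2 = 0 := le_antisymm (by linarith) (by positivity)
  funext x y
  rw [Fintype.sum_eq_zero_iff_of_nonneg (fun _ => by positivity)] at hzero
  have hx := congrFun hzero x
  rw [Pi.zero_apply, Fintype.sum_eq_zero_iff_of_nonneg (fun _ => by positivity)] at hx
  exact sub_eq_zero.mp (pow_eq_zero_iff two_ne_zero |>.mp (congrFun hx y))

/-- `‖B Bᵀ‖ ≤ ‖B‖² = 1 = ⟨B Bᵀ, B⟩` by Cauchy–Schwarz. -/
theorem mul_transpose_self_eq_of_sum_sq_eq_one_of_sum_cube_eq_one (B : Matrix ι ι ℝ)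
    (h2 : ∑ x, ∑ y, B x y ^ 2 = 1) (h3 : ∑ x, ∑ y, ∑ z, B x y * B x z * B y z = 1) :
    B * Bᵀ = B := by
  have hP : ∀ x y, (B * Bᵀ) x y = ∑ z, B x z * B y z := fun _ _ => rfl
  apply eq_of_sum_sq_add_sum_sq_le_two_mul_sum_mul
  have hPP : ∑ x, ∑ y, (B * Bᵀ) x y ^ 2 ≤ 1 :=
    calc ∑ x, ∑ y, (B * Bᵀ) x y ^ 2
        ≤ ∑ x, ∑ y, (∑ z, B x z ^ 2) * ∑ z, B y z ^ 2 := by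
          gcongr with x _ y _
          exact sum_mul_sq_le_sq_mul_sq _ _ _
      _ = 1 := by rw [← sum_mul_sum, h2, one_mul]
  have hPB : ∑ x, ∑ y, (B * Bᵀ) x y * B x y = 1 := by
    rw [← h3]
    simp only [hP, sum_mul]
    exact sum_congr rfl fun _ _ => sum_congr rfl fun _ _ => sum_congr rfl fun _ _ => by ring
  linarith

/-- Since `tr B = ‖B‖² = 1`, some `B_pp > 0`, and then `B_pp B = B_{·p} B_{·p}ᵀ`: both sides have
squared norm `B_pp²` and inner product `B_pp²`. -/
theorem exists_eq_vecMulVec_of_mul_transpose_self_eq (B : Matrix ι ι ℝ) (hB : B * Bᵀ = B)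
    (h2 : ∑ x, ∑ y, B x y ^ 2 = 1) :
    ∃ v : ι → ℝ, ∑ x, v x ^ 2 = 1 ∧ B = vecMulVec v v := by
  have hBB : ∀ x y, ∑ z, B x z * B y z = B x y := fun x y => congrFun (congrFun hB x) y
  have hsymm : ∀ x y, B y x = B x y := fun x y => by rw [← hBB, ← hBB x y]; simp only [mul_comm]
  have hdiag : ∀ x, B x x = ∑ z, B x z ^ 2 := fun x => by rw [← hBB x x]; simp only [sq]
  obtain ⟨p, hp⟩ : ∃ p, 0 < B p p := by
    have htrace : ∑ x, B x x = 1 := by simp only [hdiag, h2]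
    by_contra! hle
    linarith [sum_nonpos fun x (_ : x ∈ univ) => hle x]
  have hcol : ∑ x, B x p ^ 2 = B p p := by simp only [hdiag p, hsymm _ p]
  have hquad : ∑ x, ∑ y, B x y * (B x p * B y p) = B p p :=
    calc ∑ x, ∑ y, B x y * (B x p * B y p) = ∑ x, B x p * ∑ y, B x y * B p y := by
          simp only [mul_sum, hsymm p]
          exact sum_congr rfl fun _ _ => sum_congr rfl fun _ _ => by ring
      _ = B p p := by simp only [hBB, ← hcol, sq]
  have hrank : (fun x y => B p p * B x y) = fun x y => B x p * B y p := by
    apply eq_of_sum_sq_add_sum_sq_le_two_mul_sum_mul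
    simp only [mul_pow, ← mul_sum, ← sum_mul, h2, hcol, mul_assoc, hquad]
    nlinarith
  refine ⟨fun x => B x p / √(B p p), ?_, ?_⟩
  · simp only [div_pow, Real.sq_sqrt hp.le, ← sum_div, hcol, div_self hp.ne']
  · ext x y
    have hxy := congrFun (congrFun hrank x) y
    rw [vecMulVec_apply, div_mul_div_comm, Real.mul_self_sqrt hp.le, ← hxy,
      mul_div_cancel_left₀ _ hp.ne']

/-- The relation gives `(tr W)² = ‖W‖² = 1` and `W Wᵀ = (tr W) W`, so `(tr W) W` is a projection
of Frobenius norm one. -/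
theorem exists_mul_eq_prod_of_mul_mul_eq (W : Matrix ι ι ℝ)
    (hW : ∀ i j k l, W i j * W k l = W i k * W j l) (h2 : ∑ i, ∑ j, W i j ^ 2 = 1) :
    ∃ u : ι → ℝ, ∑ i, u i ^ 2 = 1 ∧ ∀ i j k l, W i j * W k l = u i * u j * u k * u l := by
  set t := ∑ i, W i i
  have ht : t ^ 2 = 1 := by
    rw [sq, sum_mul_sum, ← h2]
    simp only [hW _ _ _ _, sq]
  have hWW : W * Wᵀ = t • W := by
    ext i j
    simp only [mul_apply, transpose_apply, Matrix.smul_apply, smul_eq_mul, hW i _ j, ← mul_sum]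
    exact mul_comm _ _
  have hB : (t • W) * (t • W)ᵀ = t • W := by
    rw [transpose_smul, smul_mul_smul_comm, hWW, smul_smul, ← sq, ht, one_mul]
  have hB2 : ∑ i, ∑ j, (t • W) i j ^ 2 = 1 := by
    simp only [Matrix.smul_apply, smul_eq_mul, mul_pow, ht, one_mul, h2]
  obtain ⟨u, hu, hWu⟩ := exists_eq_vecMulVec_of_mul_transpose_self_eq _ hB hB2
  refine ⟨u, hu, fun i j k l => ?_⟩
  have hij := congrFun (congrFun hWu i) j
  have hkl := congrFun (congrFun hWu k) l
  simp only [Matrix.smul_apply, smul_eq_mul, vecMulVec_apply] at hij hkl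
  calc W i j * W k l = t ^ 2 * (W i j * W k l) := by rw [ht, one_mul]
    _ = (t * W i j) * (t * W k l) := by ring
    _ = u i * u j * u k * u l := by rw [hij, hkl]; ring

end RankOne

section PairMatrix

variable {N : ℕ} {A : (Fin 4 → Fin N) → ℝ}

theorem IsSym4.swap_middle (hA : IsSym4 A) (i j k l : Fin N) :
    A ![i, k, j, l] = A ![i, j, k, l] := by
  convert hA (Equiv.swap 1 2) ![i, j, k, l] using 2
  funext x
  fin_cases x <;> rfl

theorem IsSym4.swap_last (hA : IsSym4 A) (i j k l : Fin N) :
    A ![i, j, l, k] = A ![i, j, k, l] := by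
  convert hA (Equiv.swap 2 3) ![i, j, k, l] using 2
  funext x
  fin_cases x <;> rfl

def pairMatrix (A : (Fin 4 → Fin N) → ℝ) : Matrix (Fin N × Fin N) (Fin N × Fin N) ℝ :=
  fun x y => 3 * A ![x.1, x.2, y.1, y.2]

theorem IsSym4.pairMatrix_swap_middle (hA : IsSym4 A) (i j k l : Fin N) :
    pairMatrix A (i, k) (j, l) = pairMatrix A (i, j) (k, l) := by
  rw [pairMatrix, pairMatrix, hA.swap_middle]

theorem IsSym4.pairMatrix_cycle (hA : IsSym4 A) (i j k l : Fin N) :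
    pairMatrix A (i, l) (j, k) = pairMatrix A (i, j) (k, l) := by
  rw [pairMatrix, pairMatrix, hA.swap_middle i j l k, hA.swap_last]

theorem sum_sq_pairMatrix : ∑ x, ∑ y, pairMatrix A x y ^ 2 = 9 * sqnorm A := by
  simp only [pairMatrix, sqnorm, Fintype.sum_prod_type, mul_pow, mul_sum]
  norm_num

theorem IsFixedPoint.three_mul_pairMatrix (hfp : IsFixedPoint A) (i j k l : Fin N) :
    3 * pairMatrix A (i, j) (k, l) = ∑ z,
      (pairMatrix A (i, j) z * pairMatrix A (k, l) z + pairMatrix A (i, k) z * pairMatrix A (j, l) z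
        + pairMatrix A (i, l) z * pairMatrix A (j, k) z) := by
  simp only [pairMatrix, Fintype.sum_prod_type]
  rw [hfp i j k l]
  simp only [mul_sum]
  exact sum_congr rfl fun _ _ => sum_congr rfl fun _ _ => by ring

theorem sum_cube_pairMatrix (hA : IsSym4 A) (hfp : IsFixedPoint A) :
    ∑ x, ∑ y, ∑ z, pairMatrix A x y * pairMatrix A x z * pairMatrix A y z =
      ∑ x, ∑ y, pairMatrix A x y ^ 2 := by
  set T : Fin N × Fin N → Fin N × Fin N → ℝ :=
    fun x y => ∑ z, pairMatrix A x z * pairMatrix A y z * pairMatrix A x y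
  have hterm : ∀ i j k l, 3 * pairMatrix A (i, j) (k, l) ^ 2 =
      T (i, j) (k, l) + T (i, k) (j, l) + T (i, l) (j, k) := by
    intro i j k l
    show _ = ∑ z, pairMatrix A (i, j) z * pairMatrix A (k, l) z * pairMatrix A (i, j) (k, l)
      + ∑ z, pairMatrix A (i, k) z * pairMatrix A (j, l) z * pairMatrix A (i, k) (j, l)
      + ∑ z, pairMatrix A (i, l) z * pairMatrix A (j, k) z * pairMatrix A (i, l) (j, k)
    rw [hA.pairMatrix_swap_middle i j k l, hA.pairMatrix_cycle i j k l, sq, ← mul_assoc,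
      hfp.three_mul_pairMatrix, sum_mul, ← sum_add_distrib, ← sum_add_distrib]
    exact sum_congr rfl fun _ _ => by ring
  have hswap : ∑ i, ∑ j, ∑ k, ∑ l, T (i, k) (j, l) = ∑ i, ∑ j, ∑ k, ∑ l, T (i, j) (k, l) :=
    sum_congr rfl fun _ _ => sum_comm
  have hcycle : ∑ i, ∑ j, ∑ k, ∑ l, T (i, l) (j, k) = ∑ i, ∑ j, ∑ k, ∑ l, T (i, j) (k, l) :=
    sum_congr rfl fun _ _ => (sum_congr rfl fun _ _ => sum_comm).trans sum_comm
  have hsplit : 3 * ∑ x, ∑ y, pairMatrix A x y ^ 2 = 3 * ∑ x, ∑ y, T x y :=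
    calc _ = ∑ i, ∑ j, ∑ k, ∑ l, (T (i, j) (k, l) + T (i, k) (j, l) + T (i, l) (j, k)) := by
          simp only [mul_sum, Fintype.sum_prod_type, hterm]
      _ = _ := by
          simp only [sum_add_distrib, hswap, hcycle, Fintype.sum_prod_type]
          ring
  calc _ = ∑ x, ∑ y, T x y :=
        sum_congr rfl fun _ _ => sum_congr rfl fun _ _ => sum_congr rfl fun _ _ => by ring
    _ = _ := by linarith

end PairMatrix

theorem fixedPoint_norm_saturation_general {N : ℕ}
    (A : (Fin 4 → Fin N) → ℝ) (hA : IsSym4 A) (hfp : IsFixedPoint A)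
    (hnorm : Real.sqrt (sqnorm A) = 1 / 3) :
    ∃ u : Fin N → ℝ, (∑ i, u i ^ 2 = 1) ∧
      ∀ i j k l : Fin N, A ![i, j, k, l] = 1 / 3 * (u i * u j * u k * u l) := by
  have hsq : sqnorm A = 1 / 9 := by
    rw [← Real.sq_sqrt (show 0 ≤ sqnorm A by unfold sqnorm; positivity), hnorm]
    norm_num
  have h2 : ∑ x, ∑ y, pairMatrix A x y ^ 2 = 1 := by
    rw [sum_sq_pairMatrix, hsq]
    norm_num
  have hidem := mul_transpose_self_eq_of_sum_sq_eq_one_of_sum_cube_eq_one _ h2 ((sum_cube_pairMatrix hA hfp).trans h2)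
  obtain ⟨v, hv, hBv⟩ := exists_eq_vecMulVec_of_mul_transpose_self_eq _ hidem h2
  have hvA : ∀ i j k l, v (i, j) * v (k, l) = 3 * A ![i, j, k, l] :=
    fun i j k l => (congrFun (congrFun hBv (i, j)) (k, l)).symm
  obtain ⟨u, hu, hWu⟩ := exists_mul_eq_prod_of_mul_mul_eq (fun i j => v (i, j))
    (fun i j k l => by rw [hvA, hvA, hA.swap_middle]) (by rw [← hv, Fintype.sum_prod_type])
  refine ⟨u, hu, fun i j k l => ?_⟩
  linarith [hvA i j k l, hWu i j k l]

/-- a one-loop fixed point with `‖λ‖ = 1/3` is the Wilson–Fisher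
coupling `λ_{ijkl} = (1/3) u_i u_j u_k u_l` for some unit vector `u`. -/
theorem fixedPoint_norm_saturation {N : ℕ} (hN : 1 ≤ N)
    (A : (Fin 4 → Fin N) → ℝ) (hA : IsSym4 A) (hfp : IsFixedPoint A)
    (hnorm : Real.sqrt (sqnorm A) = 1 / 3) :
    ∃ u : Fin N → ℝ, (∑ i, u i ^ 2 = 1) ∧
      ∀ i j k l : Fin N, A ![i, j, k, l] = 1 / 3 * (u i * u j * u k * u l) :=
  fixedPoint_norm_saturation_general A hA hfp hnorm
end

section
/- If λ is a one-loop fixed point on ℝ^N, then a₀(λ)(N − a₀(λ))/(2N) = ‖λ‖² + ((N+4)/12) a₂(λ), where a₂(λ) = (6/(N+4)) (∑_{i,j} t_{ij}(λ)² − a₀(λ)²/N). -/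
/-- `a₂(λ) = (6/(N+4)) (∑_{i,j} t_{ij}(λ)² − a₀(λ)²/N)`. -/
noncomputable def a2 {N : ℕ} (A : (Fin 4 → Fin N) → ℝ) : ℝ :=
  6 / ((N : ℝ) + 4) *
    ((∑ i : Fin N, ∑ j : Fin N, (tmat A i j) ^ 2) - a0 A ^ 2 / (N : ℝ))

/-! Contracting the fixed point equation at `(i, j, i, j)` and summing over `i, j` gives
`a₀ = 2‖λ‖² + ∑_{i,j} t_{ij}²`: the terms `λ_{ijmn}λ_{ijmn}` and `λ_{ijmn}λ_{jimn}` each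
contribute `‖λ‖²`, while `λ_{iimn}λ_{jjmn}` factors as `∑_{m,n} t_{mn}²`. The theorem is this
identity rewritten in terms of `a₂`. -/

namespace IsSym4

variable {N : ℕ} {A : (Fin 4 → Fin N) → ℝ}

theorem apply_eq_of_comp_perm (hA : IsSym4 A) (σ : Equiv.Perm (Fin 4))
    {f g : Fin 4 → Fin N} (h : ∀ x, g x = f (σ x)) : A g = A f := by
  rw [show g = f ∘ σ from funext h]
  exact hA σ f

theorem apply_swap_01 (hA : IsSym4 A) (i j k l : Fin N) : A ![j, i, k, l] = A ![i, j, k, l] :=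
  hA.apply_eq_of_comp_perm (Equiv.swap 0 1) fun x => by fin_cases x <;> rfl

theorem apply_swap_12 (hA : IsSym4 A) (i j k l : Fin N) : A ![i, k, j, l] = A ![i, j, k, l] :=
  hA.apply_eq_of_comp_perm (Equiv.swap 1 2) fun x => by fin_cases x <;> rfl

theorem apply_swap_pairs (hA : IsSym4 A) (i j k l : Fin N) :
    A ![k, l, i, j] = A ![i, j, k, l] :=
  hA.apply_eq_of_comp_perm (Equiv.swap 0 2 * Equiv.swap 1 3) fun x => by fin_cases x <;> rfl

theorem sum_apply_diag (hA : IsSym4 A) (m n : Fin N) : ∑ i, A ![i, i, m, n] = tmat A m n :=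
  Finset.sum_congr rfl fun i _ => hA.apply_swap_pairs m n i i

theorem sum_apply_diag_mul_apply_diag (hA : IsSym4 A) :
    ∑ i, ∑ j, ∑ m, ∑ n, A ![i, i, m, n] * A ![j, j, m, n] = ∑ m, ∑ n, tmat A m n ^ 2 := by
  simp only [← hA.sum_apply_diag, sq, Finset.sum_mul_sum]
  exact (Finset.sum_congr rfl fun _ _ => Finset.sum_comm).trans <|
    Finset.sum_comm.trans <| Finset.sum_congr rfl fun _ _ => Finset.sum_comm_cycle

end IsSym4

namespace IsFixedPoint

variable {N : ℕ} {A : (Fin 4 → Fin N) → ℝ}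

theorem apply_i_j_i_j (hA : IsSym4 A) (hfp : IsFixedPoint A) (i j : Fin N) :
    A ![i, j, i, j] = ∑ m, ∑ n, (2 * A ![i, j, m, n] ^ 2 + A ![i, i, m, n] * A ![j, j, m, n]) := by
  rw [hfp]
  refine Finset.sum_congr rfl fun m _ => Finset.sum_congr rfl fun n _ => ?_
  rw [hA.apply_swap_01]
  ring

theorem a0_eq_two_mul_sqnorm_add (hA : IsSym4 A) (hfp : IsFixedPoint A) :
    a0 A = 2 * sqnorm A + ∑ i, ∑ j, tmat A i j ^ 2 := by
  calc a0 A = ∑ i, ∑ j, A ![i, j, i, j] := by simp only [a0, hA.apply_swap_12]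
    _ = 2 * sqnorm A + ∑ i, ∑ j, ∑ m, ∑ n, A ![i, i, m, n] * A ![j, j, m, n] := by
      simp only [hfp.apply_i_j_i_j hA, Finset.sum_add_distrib, sqnorm, Finset.mul_sum]
    _ = 2 * sqnorm A + ∑ i, ∑ j, tmat A i j ^ 2 := by rw [hA.sum_apply_diag_mul_apply_diag]

end IsFixedPoint

/-- at a one-loop fixed point,
`a₀(λ)(N − a₀(λ))/(2N) = ‖λ‖² + ((N+4)/12) a₂(λ)`. -/
theorem fixedPoint_a0_relation {N : ℕ} (hN : 1 ≤ N)
    (A : (Fin 4 → Fin N) → ℝ) (hA : IsSym4 A) (hfp : IsFixedPoint A) :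
    a0 A * ((N : ℝ) - a0 A) / (2 * (N : ℝ)) =
      sqnorm A + ((N : ℝ) + 4) / 12 * a2 A := by
  have hN0 : (N : ℝ) ≠ 0 := Nat.cast_ne_zero.mpr (by omega)
  rw [a2]
  field_simp
  linear_combination 12 * (N : ℝ) * hfp.a0_eq_two_mul_sqnorm_add hA
end

section
/- If λ is a one-loop fixed point on ℝ^N, then ‖λ‖² ≤ a₀(λ)(N − a₀(λ))/(2N); in particular ‖λ‖² ≤ N/8. -/
/-! Contracting the fixed point equation over `i = j`, `k = l` gives `a₀ = ‖t‖² + 2‖λ‖²`.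
Since `a₀ = tr t`, Cauchy–Schwarz gives `a₀² ≤ N ∑_i t_{ii}² ≤ N ‖t‖²`,
hence `2N‖λ‖² ≤ a₀(N − a₀)`, and `a₀(N − a₀) ≤ N²/4`. -/

section

variable {N : ℕ}

lemma sq_a0_le_card_mul_sum_sq_tmat (A : (Fin 4 → Fin N) → ℝ) :
    a0 A ^ 2 ≤ N * ∑ m, ∑ n, tmat A m n ^ 2 :=
  calc a0 A ^ 2 = (∑ i, tmat A i i) ^ 2 := rfl
    _ ≤ N * ∑ i, tmat A i i ^ 2 := by
        simpa using sq_sum_le_card_mul_sum_sq (s := Finset.univ) (f := fun i => tmat A i i)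
    _ ≤ N * ∑ m, ∑ n, tmat A m n ^ 2 := by
        gcongr with i
        exact Finset.single_le_sum (fun j _ => sq_nonneg (tmat A i j)) (Finset.mem_univ i)

variable {A : (Fin 4 → Fin N) → ℝ}

lemma IsSym4.apply_swap_pairs_s8 (hA : IsSym4 A) (i j m n : Fin N) :
    A ![i, j, m, n] = A ![m, n, i, j] := by
  rw [← hA (Equiv.swap 0 2 * Equiv.swap 1 3) ![m, n, i, j]]
  congr 1
  funext x
  fin_cases x <;> rfl

lemma IsSym4.tmat_eq_sum (hA : IsSym4 A) (m n : Fin N) :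
    tmat A m n = ∑ i, A ![i, i, m, n] :=
  Finset.sum_congr rfl fun i _ => hA.apply_swap_pairs_s8 m n i i

lemma IsFixedPoint.a0_eq (hA : IsSym4 A) (hfp : IsFixedPoint A) :
    a0 A = ∑ m, ∑ n, tmat A m n ^ 2 + 2 * sqnorm A := by
  have hcontract : ∀ i j, A ![i, i, j, j] =
      ∑ m, ∑ n, (A ![i, i, m, n] * A ![j, j, m, n] + 2 * A ![i, j, m, n] ^ 2) := fun i j => by
    rw [hfp]
    simp only [sq, two_mul, add_assoc]
  have htt : ∑ m, ∑ n, tmat A m n ^ 2 =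
      ∑ i, ∑ j, ∑ m, ∑ n, A ![i, i, m, n] * A ![j, j, m, n] := by
    simp only [hA.tmat_eq_sum, sq, Finset.sum_mul_sum]
    rw [Finset.sum_comm_cycle]
    exact Finset.sum_congr rfl fun i _ => Finset.sum_comm_cycle
  simp only [a0, hcontract, Finset.sum_add_distrib, ← Finset.mul_sum, htt, sqnorm]

lemma IsFixedPoint.two_mul_card_mul_sqnorm_le (hA : IsSym4 A) (hfp : IsFixedPoint A) :
    2 * N * sqnorm A ≤ a0 A * (N - a0 A) := by
  nlinarith [hfp.a0_eq hA, sq_a0_le_card_mul_sum_sq_tmat A]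

end

theorem fixedPoint_sqnorm_upper_general {N : ℕ}
    (A : (Fin 4 → Fin N) → ℝ) (hA : IsSym4 A) (hfp : IsFixedPoint A) :
    sqnorm A ≤ a0 A * ((N : ℝ) - a0 A) / (2 * (N : ℝ)) ∧
      sqnorm A ≤ (N : ℝ) / 8 := by
  rcases N.eq_zero_or_pos with rfl | hN
  · simp [sqnorm]
  have hN' : (0 : ℝ) < N := by exact_mod_cast hN
  have hbound := hfp.two_mul_card_mul_sqnorm_le hA
  constructor
  · rw [le_div_iff₀ (by positivity)]
    linarith
  · rw [le_div_iff₀ (by norm_num)]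
    nlinarith [sq_nonneg (N - 2 * a0 A)]

/-- at a one-loop fixed point, `‖λ‖² ≤ a₀(λ)(N − a₀(λ))/(2N)`;
in particular `‖λ‖² ≤ N/8`. -/
theorem fixedPoint_sqnorm_upper {N : ℕ} (hN : 1 ≤ N)
    (A : (Fin 4 → Fin N) → ℝ) (hA : IsSym4 A) (hfp : IsFixedPoint A) :
    sqnorm A ≤ a0 A * ((N : ℝ) - a0 A) / (2 * (N : ℝ)) ∧
      sqnorm A ≤ (N : ℝ) / 8 :=
  fixedPoint_sqnorm_upper_general A hA hfp
end
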